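/- The generating function counting ℓ-cores by their largest part satisfies ∑_{λ an ℓ-core} x^{λ_1} = 1/(1-x)^{ℓ-1} as formal power series. -/

import Mathlib

/-!
A Young diagram `μ` with largest part `k` is encoded by the set `S` of hook lengths of its first
row: a `k`-element set of positive integers, and every such set comes from exactly one diagram.
The `a`-th row of `μ` ends where the `a`-th element of the complement of `S` sits, and the hook
length of the box `(a, b)` is the first-row hook length of column `b` minus that element. So the
hook lengths of `μ` are exactly the differences `x - y` with `x ∈ S`, `y ∉ S`, `y < x`, and `μ`
is an `ℓ`-core iff `S` is closed under subtracting `ℓ`. Such a set is determined by how many of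
its elements lie in each nonzero residue class mod `ℓ`, so `ℓ`-cores with largest part `k`
correspond to `(ℓ - 1)`-tuples of naturals summing to `k`, which stars and bars counts as
`C(k + ℓ - 2, k)`, the coefficients of `(1 - X)^{-(ℓ - 1)}`.
-/

/-- The hook length of the box `(a, b)` (0-indexed row `a`, column `b`)
of the Young diagram `μ`: the number of boxes to the right in its row,
plus the number of boxes below in its column, plus one. -/
def hookLen (μ : YoungDiagram) (a b : ℕ) : ℕ :=
  μ.rowLen a + μ.colLen b - a - b - 1

/-- A partition (Young diagram) is an `ℓ`-core when no box has hook length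
divisible by `ℓ`. -/
def IsCore (ℓ : ℕ) (μ : YoungDiagram) : Prop :=
  ∀ a b : ℕ, (a, b) ∈ μ → ¬ ℓ ∣ hookLen μ a b

open Finset

def SubClosed (ℓ : ℕ) (S : Finset ℕ) : Prop := ∀ x ∈ S, ℓ ≤ x → x - ℓ ∈ S

namespace SubClosed

variable {ℓ : ℕ} {S : Finset ℕ}

lemma sub_mul_mem (hS : SubClosed ℓ S) {x : ℕ} (hx : x ∈ S) {i : ℕ} (hi : ℓ * i ≤ x) :
    x - ℓ * i ∈ S := by
  induction i with
  | zero => simpa using hx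
  | succ i ih =>
    have h := hS _ (ih ((Nat.mul_le_mul_left ℓ i.le_succ).trans hi))
      (by rw [Nat.mul_succ] at hi; omega)
    rwa [Nat.sub_sub, ← Nat.mul_succ] at h

lemma mod_ne_zero (hS : SubClosed ℓ S) (h0 : 0 ∉ S) {x : ℕ} (hx : x ∈ S) : x % ℓ ≠ 0 := by
  intro hmod
  have h := hS.sub_mul_mem hx (Nat.mul_div_le x ℓ)
  rw [← Nat.mod_eq_sub_mul_div, hmod] at h
  exact h0 h

lemma mod_add_mul_mem (hS : SubClosed ℓ S) {x : ℕ} (hx : x ∈ S) {i : ℕ} (hi : i ≤ x / ℓ) :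
    x % ℓ + ℓ * i ∈ S := by
  have hle : ℓ * i ≤ ℓ * (x / ℓ) := Nat.mul_le_mul_left ℓ hi
  have hdiv := Nat.mod_add_div x ℓ
  have h := hS.sub_mul_mem hx (i := x / ℓ - i) (by rw [Nat.mul_sub]; omega)
  rwa [Nat.mul_sub, show x - (ℓ * (x / ℓ) - ℓ * i) = x % ℓ + ℓ * i by omega] at h

/-- In each residue class mod `ℓ`, a set closed under subtracting `ℓ` consists of the smallest
members of the class. -/
lemma mem_iff_div_lt_card (hS : SubClosed ℓ S) (hℓ : 0 < ℓ) {x : ℕ} :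
    x ∈ S ↔ x / ℓ < #{y ∈ S | y % ℓ = x % ℓ} := by
  have hmod (i : ℕ) : (x % ℓ + ℓ * i) % ℓ = x % ℓ := by simp [Nat.add_mul_mod_self_left]
  constructor
  · intro hxS
    calc x / ℓ < #((range (x / ℓ + 1)).image (fun i => x % ℓ + ℓ * i)) := by
          rw [card_image_of_injective _ fun i j h => by simpa [hℓ.ne'] using h, card_range]
          exact Nat.lt_succ_self _
      _ ≤ #{y ∈ S | y % ℓ = x % ℓ} := card_le_card fun y hy => by
          obtain ⟨i, hi, rfl⟩ := mem_image.mp hy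
          exact mem_filter.mpr ⟨hS.mod_add_mul_mem hxS (Nat.lt_succ_iff.mp (mem_range.mp hi)),
            hmod i⟩
  · intro hlt
    by_contra hxS
    refine hlt.not_ge ?_
    calc #{y ∈ S | y % ℓ = x % ℓ} ≤ #((range (x / ℓ)).image (fun i => x % ℓ + ℓ * i)) :=
          card_le_card fun y hy => by
            obtain ⟨hyS, hy⟩ := mem_filter.mp hy
            refine mem_image.mpr ⟨y / ℓ, mem_range.mpr ?_, by rw [← hy, Nat.mod_add_div]⟩
            by_contra hle
            have h := hS.mod_add_mul_mem hyS (i := x / ℓ) (by omega)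
            rw [hy, Nat.mod_add_div] at h
            exact hxS h
      _ ≤ x / ℓ := card_image_le.trans (card_range _).le

end SubClosed

section OfCounts

variable {n : ℕ}

lemma succ_add_mul_mod (r : Fin n) (j : ℕ) : ((r : ℕ) + 1 + (n + 1) * j) % (n + 1) = r + 1 := by
  rw [Nat.add_mul_mod_self_left, Nat.mod_eq_of_lt (by omega)]

lemma succ_add_mul_div (r : Fin n) (j : ℕ) : ((r : ℕ) + 1 + (n + 1) * j) / (n + 1) = j := by
  rw [Nat.add_mul_div_left _ _ n.succ_pos, Nat.div_eq_of_lt (by omega), zero_add]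

lemma succ_add_mul_inj {r s : Fin n} {j i : ℕ} :
    (r : ℕ) + 1 + (n + 1) * j = s + 1 + (n + 1) * i ↔ r = s ∧ j = i := by
  refine ⟨fun h => ⟨?_, ?_⟩, by rintro ⟨rfl, rfl⟩; rfl⟩
  · have := congrArg (· % (n + 1)) h
    simp only [succ_add_mul_mod] at this
    exact Fin.ext (by omega)
  · simpa only [succ_add_mul_div] using congrArg (· / (n + 1)) h

/-- The subset of `ℕ` that misses the multiples of `n + 1` and meets the residue class `r + 1`
in its `c r` smallest members. -/
def ofCounts (c : Fin n → ℕ) : Finset ℕ :=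
  (univ.sigma fun r => range (c r)).map
    ⟨fun p => (p.1 : ℕ) + 1 + (n + 1) * p.2, fun _ _ h => Sigma.ext_iff.mpr <| by
      obtain ⟨h₁, h₂⟩ := succ_add_mul_inj.mp h; exact ⟨h₁, heq_of_eq h₂⟩⟩

variable {c : Fin n → ℕ}

lemma mem_ofCounts {x : ℕ} :
    x ∈ ofCounts c ↔ ∃ r : Fin n, ∃ j < c r, (r : ℕ) + 1 + (n + 1) * j = x := by
  simp [ofCounts]; rfl

lemma succ_add_mul_mem_ofCounts {r : Fin n} {j : ℕ} :
    (r : ℕ) + 1 + (n + 1) * j ∈ ofCounts c ↔ j < c r := by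
  refine ⟨fun h => ?_, fun h => mem_ofCounts.mpr ⟨r, j, h, rfl⟩⟩
  obtain ⟨s, i, hi, h⟩ := mem_ofCounts.mp h
  obtain ⟨rfl, rfl⟩ := succ_add_mul_inj.mp h
  exact hi

lemma card_ofCounts : #(ofCounts c) = ∑ r, c r := by
  simp [ofCounts]

lemma zero_notMem_ofCounts : 0 ∉ ofCounts c := by
  simp [mem_ofCounts]

lemma subClosed_ofCounts : SubClosed (n + 1) (ofCounts c) := by
  intro x hx hle
  obtain ⟨r, j, hj, rfl⟩ := mem_ofCounts.mp hx
  obtain ⟨i, rfl⟩ : ∃ i, j = i + 1 := Nat.exists_eq_succ_of_ne_zero (by rintro rfl; omega)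
  have hsub : (r : ℕ) + 1 + (n + 1) * (i + 1) - (n + 1) = r + 1 + (n + 1) * i := by
    rw [Nat.mul_succ]; omega
  rw [hsub, succ_add_mul_mem_ofCounts]
  omega

lemma ofCounts_injective : Function.Injective (ofCounts (n := n)) := by
  intro c d h
  ext r
  refine eq_of_forall_lt_iff fun j => ?_
  rw [← succ_add_mul_mem_ofCounts, ← succ_add_mul_mem_ofCounts, h]

lemma SubClosed.ofCounts_eq {S : Finset ℕ} (hS : SubClosed (n + 1) S) (h0 : 0 ∉ S) :
    ofCounts (fun r : Fin n => #{y ∈ S | y % (n + 1) = r + 1}) = S := by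
  ext x
  rw [mem_ofCounts]
  constructor
  · rintro ⟨r, j, hj, rfl⟩
    rwa [hS.mem_iff_div_lt_card n.succ_pos, succ_add_mul_div, succ_add_mul_mod]
  · intro hx
    have hmod := hS.mod_ne_zero h0 hx
    have hlt := Nat.mod_lt x (Nat.add_one_pos n)
    refine ⟨⟨x % (n + 1) - 1, by omega⟩, x / (n + 1), ?_, ?_⟩
    · rw [hS.mem_iff_div_lt_card n.succ_pos] at hx
      convert hx using 4
      simp only
      omega
    · simp only
      have := Nat.mod_add_div x (n + 1)
      omega

lemma card_subClosed_eq_card_tuples (n k : ℕ) :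
    Nat.card {S : Finset ℕ // 0 ∉ S ∧ SubClosed (n + 1) S ∧ #S = k}
      = Nat.card {c : Fin n → ℕ // ∑ r, c r = k} := by
  refine (Nat.card_eq_of_bijective
    (fun c => ⟨ofCounts c.1, zero_notMem_ofCounts, subClosed_ofCounts, card_ofCounts.trans c.2⟩)
    ⟨fun c d h => Subtype.ext (ofCounts_injective (congrArg Subtype.val h)), ?_⟩).symm
  rintro ⟨S, h0, hS, rfl⟩
  refine ⟨⟨_, (card_ofCounts).symm.trans (congrArg card (hS.ofCounts_eq h0))⟩, ?_⟩
  exact Subtype.ext (hS.ofCounts_eq h0)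

lemma card_tuples_sum_eq_choose (n k : ℕ) :
    Nat.card {c : Fin n → ℕ // ∑ r, c r = k} = (n + k - 1).choose k := by
  rw [← Nat.card_congr (Sym.equivNatSumOfFintype (Fin n) k), Nat.card_eq_fintype_card,
    Sym.card_sym_eq_choose, Fintype.card_fin]

end OfCounts

lemma exists_le_lt_succ_of_strictMono {f : ℕ → ℕ} (hf : StrictMono f) (h0 : f 0 = 0) (x : ℕ) :
    ∃ a, f a ≤ x ∧ x < f (a + 1) := by
  induction x with
  | zero => exact ⟨0, h0.le, by simpa [h0] using hf Nat.zero_lt_one⟩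
  | succ x ih =>
    obtain ⟨a, hle, hlt⟩ := ih
    rcases (Nat.succ_le_of_lt hlt).lt_or_eq with h | h
    · exact ⟨a, by omega, h⟩
    · exact ⟨a + 1, h.ge, by have := hf (Nat.lt_add_one (a + 1)); omega⟩

lemma Finset.infinite_setOf_notMem (S : Finset ℕ) : {x | x ∉ S}.Infinite :=
  S.finite_toSet.infinite_compl

namespace YoungDiagram

variable (μ : YoungDiagram)

def firstRowHooks : Finset ℕ := (range (μ.rowLen 0)).image (hookLen μ 0)

/-- The `a`-th smallest natural number that is not a first-row hook length (`range_hookGap`). -/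
def hookGap (a : ℕ) : ℕ := μ.rowLen 0 + a - μ.rowLen a

lemma hookGap_add_rowLen (a : ℕ) : μ.hookGap a + μ.rowLen a = μ.rowLen 0 + a := by
  have := μ.rowLen_anti 0 a a.zero_le
  unfold hookGap
  omega

lemma hookGap_zero : μ.hookGap 0 = 0 := by
  simp [hookGap]

lemma hookGap_strictMono : StrictMono μ.hookGap := by
  refine strictMono_nat_of_lt_succ fun a => ?_
  have := μ.hookGap_add_rowLen a
  have := μ.hookGap_add_rowLen (a + 1)
  have := μ.rowLen_anti a (a + 1) a.le_succ
  omega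

variable {μ}

lemma hookLen_add_of_mem {a b : ℕ} (h : (a, b) ∈ μ) :
    hookLen μ a b + a + b + 1 = μ.rowLen a + μ.colLen b := by
  have := mem_iff_lt_rowLen.mp h
  have := mem_iff_lt_colLen.mp h
  unfold hookLen
  omega

lemma hookLen_pos {a b : ℕ} (h : (a, b) ∈ μ) : 0 < hookLen μ a b := by
  have := mem_iff_lt_rowLen.mp h
  have := mem_iff_lt_colLen.mp h
  have := hookLen_add_of_mem h
  omega

lemma hookLen_add_hookGap {a b : ℕ} (h : (a, b) ∈ μ) :
    hookLen μ a b + μ.hookGap a = hookLen μ 0 b := by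
  have := hookLen_add_of_mem h
  have := hookLen_add_of_mem (μ.up_left_mem a.zero_le le_rfl h)
  have := μ.hookGap_add_rowLen a
  omega

lemma hookLen_zero_lt_hookGap {a b : ℕ} (hb : b < μ.rowLen 0) (h : (a, b) ∉ μ) :
    hookLen μ 0 b < μ.hookGap a := by
  have hrow : μ.rowLen a ≤ b := not_lt.mp (mt mem_iff_lt_rowLen.mpr h)
  have hcol : μ.colLen b ≤ a := not_lt.mp (mt mem_iff_lt_colLen.mpr h)
  have := hookLen_add_of_mem (mem_iff_lt_rowLen.mpr hb)
  have := μ.hookGap_add_rowLen a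
  omega

lemma hookGap_ne_hookLen_zero {a b : ℕ} (hb : b < μ.rowLen 0) : μ.hookGap a ≠ hookLen μ 0 b := by
  by_cases h : (a, b) ∈ μ
  · have := hookLen_add_hookGap h
    have := hookLen_pos h
    omega
  · exact (hookLen_zero_lt_hookGap hb h).ne'

lemma mem_firstRowHooks {x : ℕ} : x ∈ μ.firstRowHooks ↔ ∃ b < μ.rowLen 0, hookLen μ 0 b = x := by
  simp [firstRowHooks]

lemma range_hookGap : Set.range μ.hookGap = (↑μ.firstRowHooks)ᶜ := by
  ext x
  simp only [Set.mem_range, Set.mem_compl_iff, mem_coe, mem_firstRowHooks, not_exists, not_and]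
  constructor
  · rintro ⟨a, rfl⟩ b hb
    exact (hookGap_ne_hookLen_zero hb).symm
  · intro hx
    obtain ⟨a, hle, hlt⟩ := exists_le_lt_succ_of_strictMono μ.hookGap_strictMono μ.hookGap_zero x
    refine ⟨a, hle.eq_or_lt.resolve_right fun hgt => ?_⟩
    -- a number strictly between two consecutive gaps is the first-row hook length of a column
    -- of length `a + 1`
    have h1 := μ.hookGap_add_rowLen a
    have h2 := μ.hookGap_add_rowLen (a + 1)
    have hrow := μ.rowLen_anti 0 a a.zero_le
    set b := μ.rowLen a - (x - μ.hookGap a)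
    have hmem : (a, b) ∈ μ := mem_iff_lt_rowLen.mpr (by omega)
    have hcol : μ.colLen b = a + 1 := by
      have := mem_iff_lt_colLen.mp hmem
      have : ¬ a + 1 < μ.colLen b := fun h => by
        have := mem_iff_lt_rowLen.mp (mem_iff_lt_colLen.mpr h)
        omega
      omega
    have := hookLen_add_of_mem (μ.up_left_mem a.zero_le le_rfl hmem)
    exact hx b (by omega) (by omega)

lemma zero_notMem_firstRowHooks : 0 ∉ μ.firstRowHooks := by
  rw [mem_firstRowHooks]
  rintro ⟨b, hb, h⟩
  exact (hookLen_pos (mem_iff_lt_rowLen.mpr hb)).ne' h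

lemma card_firstRowHooks : #μ.firstRowHooks = μ.rowLen 0 := by
  refine (card_image_of_injOn (StrictAntiOn.injOn fun b hb b' hb' hlt => ?_)).trans (card_range _)
  have := hookLen_add_of_mem (mem_iff_lt_rowLen.mpr (mem_range.mp hb))
  have := hookLen_add_of_mem (mem_iff_lt_rowLen.mpr (mem_range.mp hb'))
  have := μ.colLen_anti b b' hlt.le
  omega

lemma firstRowHooks_injective : Function.Injective firstRowHooks := by
  intro μ ν h
  have hrow₀ : μ.rowLen 0 = ν.rowLen 0 := by rw [← card_firstRowHooks, h, card_firstRowHooks]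
  have hgap : μ.hookGap = ν.hookGap :=
    μ.hookGap_strictMono.range_inj ν.hookGap_strictMono |>.mp (by rw [range_hookGap, range_hookGap, h])
  have hrow (a : ℕ) : μ.rowLen a = ν.rowLen a := by
    have := μ.hookGap_add_rowLen a
    have := ν.hookGap_add_rowLen a
    have := congrFun hgap a
    omega
  ext ⟨a, b⟩
  rw [mem_cells, mem_cells, mem_iff_lt_rowLen, mem_iff_lt_rowLen, hrow]

section OfHooks

variable (S : Finset ℕ)

/-- `(a, b) ∈ μ` iff the `b`-th largest first-row hook length exceeds the `a`-th gap, so this is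
the length of row `a` in the diagram whose first-row hook lengths are `S`. -/
noncomputable def ofHooksRowLen (a : ℕ) : ℕ := #{s ∈ S | Nat.nth (· ∉ S) a < s}

variable {S}

lemma ofHooksRowLen_antitone : Antitone (ofHooksRowLen S) := fun _ _ hle =>
  card_le_card <| monotone_filter_right S fun _ _ hlt =>
    ((Nat.nth_strictMono S.infinite_setOf_notMem).monotone hle).trans_lt hlt

lemma ofHooksRowLen_add_nth (a : ℕ) : ofHooksRowLen S a + Nat.nth (· ∉ S) a = #S + a := by
  unfold ofHooksRowLen
  set g := Nat.nth (· ∉ S) a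
  have hg : g ∉ S := Nat.nth_mem_of_infinite S.infinite_setOf_notMem a
  have hbelow : {s ∈ S | ¬ g < s} = {x ∈ range g | x ∈ S} := by
    ext x
    simp only [mem_filter, mem_range, not_lt]
    exact ⟨fun ⟨hx, hle⟩ => ⟨hle.lt_of_ne (ne_of_mem_of_not_mem hx hg), hx⟩,
      fun ⟨hlt, hx⟩ => ⟨hx, hlt.le⟩⟩
  have hcount : #{x ∈ range g | x ∉ S} = a := by
    rw [← Nat.count_eq_card_filter_range, Nat.count_nth_of_infinite S.infinite_setOf_notMem]
  have h₁ := card_filter_add_card_filter_not (s := S) (g < ·)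
  have h₂ := card_filter_add_card_filter_not (s := range g) (· ∈ S)
  rw [hbelow] at h₁
  rw [card_range] at h₂
  omega

variable (S) in
noncomputable def ofHooks : YoungDiagram where
  cells := (range (S.sup id) ×ˢ range #S).filter fun p => p.2 < ofHooksRowLen S p.1
  isLowerSet := by
    rintro ⟨a, b⟩ ⟨a', b'⟩ ⟨ha, hb⟩ h
    simp only [coe_filter, mem_product, mem_range, Set.mem_ofPred] at h ⊢
    have := ofHooksRowLen_antitone (S := S) (show a' ≤ a from ha)
    exact ⟨⟨by omega, by omega⟩, by omega⟩

lemma mem_ofHooks {a b : ℕ} : (a, b) ∈ ofHooks S ↔ b < ofHooksRowLen S a := by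
  rw [← mem_cells]
  simp only [ofHooks, mem_filter, mem_product, mem_range]
  refine ⟨fun h => h.2, fun h => ⟨⟨?_, h.trans_le (card_filter_le _ _)⟩, h⟩⟩
  obtain ⟨s, hs⟩ := card_pos.mp (b.zero_le.trans_lt h)
  rw [mem_filter] at hs
  calc a ≤ Nat.nth (· ∉ S) a := (Nat.nth_strictMono S.infinite_setOf_notMem).le_apply
    _ < s := hs.2
    _ ≤ S.sup id := le_sup (f := id) hs.1

lemma rowLen_ofHooks (a : ℕ) : (ofHooks S).rowLen a = ofHooksRowLen S a :=
  eq_of_forall_lt_iff fun _ => by rw [← mem_iff_lt_rowLen, mem_ofHooks]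

lemma hookGap_ofHooks (h0 : 0 ∉ S) : (ofHooks S).hookGap = Nat.nth (· ∉ S) := by
  funext a
  have hrow₀ := ofHooksRowLen_add_nth (S := S) 0
  have hrow := ofHooksRowLen_add_nth (S := S) a
  rw [Nat.nth_zero_of_zero h0] at hrow₀
  rw [hookGap, rowLen_ofHooks, rowLen_ofHooks]
  omega

theorem firstRowHooks_ofHooks (h0 : 0 ∉ S) : (ofHooks S).firstRowHooks = S := by
  rw [← coe_inj, ← compl_inj_iff, ← range_hookGap, hookGap_ofHooks h0,
    Nat.range_nth_of_infinite S.infinite_setOf_notMem]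
  rfl

end OfHooks

theorem isCore_iff_subClosed {ℓ : ℕ} : IsCore ℓ μ ↔ SubClosed ℓ μ.firstRowHooks := by
  have hgap (a : ℕ) : μ.hookGap a ∉ μ.firstRowHooks := by
    simpa [range_hookGap] using Set.mem_range_self (f := μ.hookGap) a
  constructor
  · intro hcore x hx hle
    obtain ⟨b, hb, rfl⟩ := mem_firstRowHooks.mp hx
    by_contra hnot
    obtain ⟨a, ha⟩ : hookLen μ 0 b - ℓ ∈ Set.range μ.hookGap := by
      rw [range_hookGap]
      exact hnot
    have hmem : (a, b) ∈ μ := by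
      by_contra h
      have := hookLen_zero_lt_hookGap hb h
      omega
    have := hookLen_add_hookGap hmem
    exact hcore a b hmem ⟨1, by omega⟩
  · rintro hS a b hmem ⟨c, hc⟩
    have hb : hookLen μ 0 b ∈ μ.firstRowHooks :=
      mem_firstRowHooks.mpr ⟨b, mem_iff_lt_rowLen.mp (μ.up_left_mem a.zero_le le_rfl hmem), rfl⟩
    have hsum := hookLen_add_hookGap hmem
    have h := hS.sub_mul_mem hb (i := c) (by omega)
    rw [show hookLen μ 0 b - ℓ * c = μ.hookGap a by omega] at h
    exact hgap a h

theorem card_isCore_eq_card_subClosed (ℓ k : ℕ) :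
    Nat.card {μ : YoungDiagram // IsCore ℓ μ ∧ μ.rowLen 0 = k}
      = Nat.card {S : Finset ℕ // 0 ∉ S ∧ SubClosed ℓ S ∧ #S = k} := by
  refine Nat.card_eq_of_bijective (fun μ => ⟨μ.1.firstRowHooks, zero_notMem_firstRowHooks,
    isCore_iff_subClosed.mp μ.2.1, card_firstRowHooks.trans μ.2.2⟩)
    ⟨fun μ ν h => Subtype.ext (firstRowHooks_injective (congrArg Subtype.val h)), ?_⟩
  rintro ⟨S, h0, hS, rfl⟩
  refine ⟨⟨ofHooks S, isCore_iff_subClosed.mpr ((firstRowHooks_ofHooks h0).symm ▸ hS), ?_⟩,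
    Subtype.ext (firstRowHooks_ofHooks h0)⟩
  rw [← card_firstRowHooks, firstRowHooks_ofHooks h0]

end YoungDiagram

/-- The generating function counting `ℓ`-cores by their largest part satisfies
`∑_{λ an ℓ-core} x^{λ₁} = 1/(1-x)^{ℓ-1}` as formal power series over `ℤ`,
i.e. `(1 - X)^(ℓ-1)` times the series whose `k`-th coefficient is the number of
`ℓ`-cores with largest part `k` equals `1`. -/
theorem stmt_2 (ℓ : ℕ) (hℓ : 2 ≤ ℓ) :
    (1 - PowerSeries.X : PowerSeries ℤ) ^ (ℓ - 1) *
      PowerSeries.mk (fun k =>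
        (Nat.card {μ : YoungDiagram // IsCore ℓ μ ∧ μ.rowLen 0 = k} : ℤ)) = 1 := by
  obtain ⟨n, rfl⟩ : ∃ n, ℓ = n + 1 + 1 := ⟨ℓ - 2, by omega⟩
  have hcount (k : ℕ) :
      Nat.card {μ : YoungDiagram // IsCore (n + 1 + 1) μ ∧ μ.rowLen 0 = k} = (n + k).choose n := by
    rw [YoungDiagram.card_isCore_eq_card_subClosed, card_subClosed_eq_card_tuples,
      card_tuples_sum_eq_choose, show n + 1 + k - 1 = n + k by omega, Nat.choose_symm_add]
  simp only [hcount, Nat.add_sub_cancel]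
  rw [mul_comm]
  exact PowerSeries.mk_add_choose_mul_one_sub_pow_eq_one ℤ n
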